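/- Limit of matrix powers toward an ergodic class: assume A has self-confidence, let E be an ergodic class of A, and let π : Fin n → ℝ be a stationary distribution of A supported on E (π_j ≥ 0, Σ_j π_j = 1, π_j = 0 for j ∉ E, and Σ_i π_i A_{ij} = π_j for all j). Then for every state i and every j ∈ E, lim_{ℓ→∞} (A^ℓ)_{ij} = h_i^E · π_j, where h_i^E := lim_{n→∞} Σ_{j'∈E} (A^n)_{ij'} (this limit exists). -/

import Mathlib

open Finset Filter Topology Matrix

/-- `j` is a consequent of `i` relative to the matrix `A`. -/
def Consequent {n : ℕ} (A : Matrix (Fin n) (Fin n) ℝ) (i j : Fin n) : Prop :=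
  ∃ m : ℕ, 1 ≤ m ∧ 0 < (A ^ m) i j

/-- A state is recurrent if it is a consequent of each of its consequents. -/
def Recurrent {n : ℕ} (A : Matrix (Fin n) (Fin n) ℝ) (i : Fin n) : Prop :=
  ∀ j, Consequent A i j → Consequent A j i

/-! An ergodic class `E` is closed, and by self-confidence some power `A ^ m` is entrywise at
least some `δ > 0` on `E × E`. For `k ∈ E` the deviation `(A ^ ℓ) k j - π j` has `π`-mean zero
over `E`, hence entries of both signs, so averaging it with a row of `A ^ m` shrinks it by the
factor `1 - δ`: the columns of `A ^ ℓ` converge to `π` on `E` geometrically. From an arbitrary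
state `i`, the mass `∑ j' ∈ E, (A ^ ℓ) i j'` is nondecreasing and converges to some `h`; splitting
the paths of length `ℓ + s` at time `ℓ`, those already in `E` contribute about
`(∑ j' ∈ E, (A ^ ℓ) i j') * π j` for large `s`, and the others at most
`h - ∑ j' ∈ E, (A ^ ℓ) i j'`. -/

lemma Finset.exists_pos_forall_le {α : Type*} (s : Finset α) {f : α → ℝ}
    (hf : ∀ x ∈ s, 0 < f x) : ∃ δ > 0, ∀ x ∈ s, δ ≤ f x :=
  ((eventually_mem_nhdsWithin (s := Set.Ioi 0) (a := 0)).and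
    ((eventually_all_finset s).2 fun x hx =>
      eventually_nhdsWithin_of_eventually_nhds (eventually_le_nhds (hf x hx)))).exists

lemma tendsto_of_forall_abs_add_sub_le {a : ℕ → ℝ} {b : ℕ → ℕ → ℝ} {c e : ℕ → ℝ} {L : ℝ}
    (hb : ∀ ℓ, Tendsto (b ℓ) atTop (𝓝 (c ℓ))) (hc : Tendsto c atTop (𝓝 L))
    (he : Tendsto e atTop (𝓝 0)) (hab : ∀ ℓ s, |a (ℓ + s) - b ℓ s| ≤ e ℓ) :
    Tendsto a atTop (𝓝 L) := by
  rw [Metric.tendsto_atTop]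
  intro ε hε
  obtain ⟨ℓ, hcℓ, heℓ⟩ := ((Metric.tendsto_nhds.1 hc (ε / 3) (by positivity)).and
    (Metric.tendsto_nhds.1 he (ε / 3) (by positivity))).exists
  obtain ⟨N, hN⟩ := Metric.tendsto_atTop.1 (hb ℓ) (ε / 3) (by positivity)
  refine ⟨ℓ + N, fun t ht => ?_⟩
  obtain ⟨s, rfl⟩ := Nat.exists_eq_add_of_le (le_of_add_le_left ht)
  rw [Real.dist_eq, sub_zero] at heℓ
  have hab' : dist (a (ℓ + s)) (b ℓ s) < ε / 3 :=
    (hab ℓ s).trans_lt ((le_abs_self _).trans_lt heℓ)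
  calc dist (a (ℓ + s)) L
      ≤ dist (a (ℓ + s)) (b ℓ s) + dist (b ℓ s) (c ℓ) + dist (c ℓ) L := dist_triangle4 _ _ _ _
    _ < ε / 3 + ε / 3 + ε / 3 := by gcongr; exact hN s (by omega)
    _ = ε := by ring

section WeightedAverage

variable {ι : Type*} {s : Finset ι} {w π x : ι → ℝ} {δ M : ℝ}

lemma exists_le_zero_of_sum_mul_eq_zero (hπ : ∀ k ∈ s, 0 ≤ π k) (hπ1 : ∑ k ∈ s, π k = 1)
    (hx : ∑ k ∈ s, π k * x k = 0) : ∃ k ∈ s, x k ≤ 0 := by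
  have hs : s.Nonempty := nonempty_of_sum_ne_zero (f := π) (by rw [hπ1]; exact one_ne_zero)
  obtain ⟨k, hk, hmin⟩ := s.exists_min_image x hs
  refine ⟨k, hk, ?_⟩
  calc x k = ∑ k' ∈ s, π k' * x k := by rw [← sum_mul, hπ1, one_mul]
    _ ≤ ∑ k' ∈ s, π k' * x k' :=
        sum_le_sum fun k' hk' => mul_le_mul_of_nonneg_left (hmin k' hk') (hπ k' hk')
    _ = 0 := hx

lemma sum_mul_le_of_le_zero (hw : ∀ k ∈ s, 0 ≤ w k) (hw1 : ∑ k ∈ s, w k = 1)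
    (hδ : 0 ≤ δ) (hδw : ∀ k ∈ s, δ ≤ w k) (hx : ∀ k ∈ s, x k ≤ M) {k₀ : ι} (hk₀ : k₀ ∈ s)
    (hxk₀ : x k₀ ≤ 0) : ∑ k ∈ s, w k * x k ≤ (1 - δ) * M := by
  have hgap : w k₀ * (M - x k₀) ≤ ∑ k ∈ s, w k * (M - x k) :=
    single_le_sum (f := fun k => w k * (M - x k))
      (fun k hk => mul_nonneg (hw k hk) (sub_nonneg.2 (hx k hk))) hk₀
  have hsum : ∑ k ∈ s, w k * (M - x k) = M - ∑ k ∈ s, w k * x k := by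
    simp only [mul_sub, sum_sub_distrib, ← sum_mul, hw1, one_mul]
  nlinarith [mul_nonneg (sub_nonneg.2 (hδw k₀ hk₀)) (sub_nonneg.2 (hx k₀ hk₀)),
    mul_nonneg hδ (neg_nonneg.2 hxk₀)]

lemma abs_sum_mul_le_of_sum_mul_eq_zero (hw : ∀ k ∈ s, 0 ≤ w k) (hw1 : ∑ k ∈ s, w k = 1)
    (hδ : 0 ≤ δ) (hδw : ∀ k ∈ s, δ ≤ w k) (hπ : ∀ k ∈ s, 0 ≤ π k) (hπ1 : ∑ k ∈ s, π k = 1)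
    (hx0 : ∑ k ∈ s, π k * x k = 0) (hM : ∀ k ∈ s, |x k| ≤ M) :
    |∑ k ∈ s, w k * x k| ≤ (1 - δ) * M := by
  rw [abs_le]
  constructor
  · obtain ⟨k₀, hk₀, hxk₀⟩ := exists_le_zero_of_sum_mul_eq_zero (x := -x) hπ hπ1
      (by simp only [Pi.neg_apply, mul_neg, sum_neg_distrib, hx0, neg_zero])
    have := sum_mul_le_of_le_zero hw hw1 hδ hδw
      (fun k hk => (neg_le_abs (x k)).trans (hM k hk)) hk₀ hxk₀
    simp only [mul_neg, sum_neg_distrib] at this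
    linarith
  · obtain ⟨k₀, hk₀, hxk₀⟩ := exists_le_zero_of_sum_mul_eq_zero hπ hπ1 hx0
    exact sum_mul_le_of_le_zero hw hw1 hδ hδw
      (fun k hk => (le_abs_self (x k)).trans (hM k hk)) hk₀ hxk₀

end WeightedAverage

namespace Matrix

variable {ι : Type*}

lemma apply_mul_apply_le_mul_apply [Fintype ι] [DecidableEq ι] {M N : Matrix ι ι ℝ}
    (hM : M ∈ rowStochastic ℝ ι) (hN : N ∈ rowStochastic ℝ ι) (i j k : ι) :
    M i j * N j k ≤ (M * N) i k := by
  rw [mul_apply]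
  exact single_le_sum (f := fun j => M i j * N j k)
    (fun _ _ => mul_nonneg (nonneg_of_mem_rowStochastic hM) (nonneg_of_mem_rowStochastic hN))
    (mem_univ j)

lemma vecMul_pow_eq_self [Fintype ι] [DecidableEq ι] {R : Type*} [Semiring R]
    {P : Matrix ι ι R} {π : ι → R}
    (hπ : π ᵥ* P = π) (ℓ : ℕ) : π ᵥ* P ^ ℓ = π := by
  induction ℓ with
  | zero => rw [pow_zero, vecMul_one]
  | succ ℓ ih => rw [pow_succ, ← vecMul_vecMul, ih, hπ]

def IsAbsorbing {R : Type*} [Zero R] (P : Matrix ι ι R) (E : Finset ι) : Prop :=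
  ∀ j ∈ E, ∀ k ∉ E, P j k = 0

namespace IsAbsorbing

section Semiring

variable {R : Type*} [Semiring R] {M N P : Matrix ι ι R} {E : Finset ι}

lemma mul_apply [Fintype ι] (hM : IsAbsorbing M E) {j : ι} (hj : j ∈ E) (N : Matrix ι ι R)
    (k : ι) :
    (M * N) j k = ∑ k' ∈ E, M j k' * N k' k := by
  rw [Matrix.mul_apply]
  exact (sum_subset (subset_univ E) fun k' _ hk' => by rw [hM j hj k' hk', zero_mul]).symm

lemma mul [Fintype ι] (hM : IsAbsorbing M E) (hN : IsAbsorbing N E) : IsAbsorbing (M * N) E :=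
  fun j hj k hk => by
    rw [hM.mul_apply hj]
    exact sum_eq_zero fun k' hk' => by rw [hN k' hk' k hk, mul_zero]

lemma one [DecidableEq ι] : IsAbsorbing (1 : Matrix ι ι R) E :=
  fun _ hj _ hk => one_apply_ne fun hjk => hk (hjk ▸ hj)

lemma pow [Fintype ι] [DecidableEq ι] (hP : IsAbsorbing P E) (ℓ : ℕ) :
    IsAbsorbing (P ^ ℓ) E := by
  induction ℓ with
  | zero => rw [pow_zero]; exact one
  | succ ℓ ih => rw [pow_succ]; exact ih.mul hP

end Semiring

variable [Fintype ι] [DecidableEq ι] {M N P : Matrix ι ι ℝ} {E : Finset ι}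

lemma sum_apply_eq_one (hP : P ∈ rowStochastic ℝ ι) (hE : IsAbsorbing P E) {j : ι}
    (hj : j ∈ E) : ∑ k ∈ E, P j k = 1 := by
  rw [← sum_row_of_mem_rowStochastic hP j]
  exact sum_subset (subset_univ E) fun k _ hk => hE j hj k hk

lemma sum_mul_apply_eq (hN : N ∈ rowStochastic ℝ ι) (hE : IsAbsorbing N E) (i : ι) :
    ∑ j ∈ E, (M * N) i j = ∑ k ∈ E, M i k + ∑ k ∈ Eᶜ, M i k * ∑ j ∈ E, N k j := by
  simp only [Matrix.mul_apply]
  rw [sum_comm]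
  simp_rw [← mul_sum]
  rw [← sum_add_sum_compl E]
  congr 1
  exact sum_congr rfl fun k hk => by rw [hE.sum_apply_eq_one hN hk, mul_one]

lemma sum_apply_le_sum_mul_apply (hM : M ∈ rowStochastic ℝ ι) (hN : N ∈ rowStochastic ℝ ι)
    (hE : IsAbsorbing N E) (i : ι) : ∑ k ∈ E, M i k ≤ ∑ j ∈ E, (M * N) i j := by
  rw [hE.sum_mul_apply_eq hN]
  exact le_add_of_nonneg_right <| sum_nonneg fun k _ => mul_nonneg
    (nonneg_of_mem_rowStochastic hM) (sum_nonneg fun j _ => nonneg_of_mem_rowStochastic hN)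

/-- The terms of `(M * N) i j` through states `k ∉ E` weigh at most the mass that `E` gains
during the `N`-step. -/
lemma abs_mul_apply_sub_sum_le (hM : M ∈ rowStochastic ℝ ι) (hN : N ∈ rowStochastic ℝ ι)
    (hE : IsAbsorbing N E) (i : ι) {j : ι} (hj : j ∈ E) :
    |(M * N) i j - ∑ k ∈ E, M i k * N k j| ≤ ∑ j' ∈ E, (M * N) i j' - ∑ k ∈ E, M i k := by
  rw [hE.sum_mul_apply_eq hN, add_sub_cancel_left, Matrix.mul_apply, ← sum_add_sum_compl E,
    add_sub_cancel_left, abs_of_nonneg (sum_nonneg fun k _ => mul_nonneg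
      (nonneg_of_mem_rowStochastic hM) (nonneg_of_mem_rowStochastic hN))]
  exact sum_le_sum fun k _ => mul_le_mul_of_nonneg_left
    (single_le_sum (f := fun j' => N k j') (fun _ _ => nonneg_of_mem_rowStochastic hN) hj)
    (nonneg_of_mem_rowStochastic hM)

lemma monotone_sum_pow_apply (hP : P ∈ rowStochastic ℝ ι) (hE : IsAbsorbing P E) (i : ι) :
    Monotone fun ℓ => ∑ j ∈ E, (P ^ ℓ) i j :=
  monotone_nat_of_le_succ fun ℓ => by
    rw [pow_succ]
    exact sum_apply_le_sum_mul_apply (pow_mem hP ℓ) hP hE i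

lemma tendsto_sum_pow_apply (hP : P ∈ rowStochastic ℝ ι) (hE : IsAbsorbing P E) (i : ι) :
    Tendsto (fun ℓ => ∑ j ∈ E, (P ^ ℓ) i j) atTop (𝓝 (⨆ ℓ, ∑ j ∈ E, (P ^ ℓ) i j)) := by
  refine tendsto_atTop_ciSup (hE.monotone_sum_pow_apply hP i) ⟨1, ?_⟩
  rintro _ ⟨ℓ, rfl⟩
  calc ∑ j ∈ E, (P ^ ℓ) i j ≤ ∑ j, (P ^ ℓ) i j :=
        sum_le_sum_of_subset_of_nonneg (subset_univ E) fun j _ _ =>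
          nonneg_of_mem_rowStochastic (pow_mem hP ℓ)
    _ = 1 := sum_row_of_mem_rowStochastic (pow_mem hP ℓ) i

lemma pow_add_apply_sub (hP : P ∈ rowStochastic ℝ ι) (hE : IsAbsorbing P E) {k : ι}
    (hk : k ∈ E) (m ℓ : ℕ) (j : ι) (c : ℝ) :
    (P ^ (m + ℓ)) k j - c = ∑ k' ∈ E, (P ^ m) k k' * ((P ^ ℓ) k' j - c) := by
  rw [pow_add, (hE.pow m).mul_apply hk]
  simp only [mul_sub, sum_sub_distrib, ← sum_mul,
    (hE.pow m).sum_apply_eq_one (pow_mem hP m) hk, one_mul]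

lemma sum_mul_pow_apply_sub_eq_zero {π : ι → ℝ} (hπE : ∑ k ∈ E, π k = 1)
    (hπ_supp : ∀ k ∉ E, π k = 0) (hπ : π ᵥ* P = π) (ℓ : ℕ) (j : ι) :
    ∑ k ∈ E, π k * ((P ^ ℓ) k j - π j) = 0 := by
  have hstat : ∑ k ∈ E, π k * (P ^ ℓ) k j = π j := by
    rw [sum_subset (subset_univ E) fun k _ hk => by rw [hπ_supp k hk, zero_mul]]
    exact congrFun (vecMul_pow_eq_self hπ ℓ) j
  simp only [mul_sub, sum_sub_distrib, ← sum_mul, hstat, hπE, one_mul, sub_self]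

theorem tendsto_pow_apply (hP : P ∈ rowStochastic ℝ ι) (hE : IsAbsorbing P E) {m : ℕ}
    (hm : m ≠ 0) {δ : ℝ} (hδ : 0 < δ) (hδm : ∀ k ∈ E, ∀ k' ∈ E, δ ≤ (P ^ m) k k')
    {π : ι → ℝ} (hπ_nonneg : ∀ k, 0 ≤ π k) (hπ_sum : ∑ k, π k = 1)
    (hπ_supp : ∀ k ∉ E, π k = 0) (hπ : π ᵥ* P = π) {k : ι} (hk : k ∈ E) (j : ι) :
    Tendsto (fun ℓ => (P ^ ℓ) k j) atTop (𝓝 (π j)) := by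
  have hπE : ∑ k ∈ E, π k = 1 := by
    rw [← hπ_sum]
    exact sum_subset (subset_univ E) fun k _ hk => hπ_supp k hk
  have hδ1 : δ ≤ 1 := (hδm k hk k hk).trans (le_one_of_mem_rowStochastic (pow_mem hP m))
  have hdecay : ∀ q ℓ, ∀ k ∈ E, |(P ^ (m * q + ℓ)) k j - π j| ≤ (1 - δ) ^ q := by
    intro q
    induction q with
    | zero =>
      intro ℓ k _
      have hπj : π j ≤ 1 := hπ_sum ▸ single_le_sum (fun k _ => hπ_nonneg k) (mem_univ j)
      rw [mul_zero, zero_add, pow_zero, abs_sub_le_iff]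
      constructor <;> linarith [hπ_nonneg j, nonneg_of_mem_rowStochastic (pow_mem hP ℓ) (i := k)
        (j := j), le_one_of_mem_rowStochastic (pow_mem hP ℓ) (i := k) (j := j)]
    | succ q ih =>
      intro ℓ k hk
      rw [show m * (q + 1) + ℓ = m + (m * q + ℓ) by ring, hE.pow_add_apply_sub hP hk, pow_succ']
      exact abs_sum_mul_le_of_sum_mul_eq_zero
        (fun _ _ => nonneg_of_mem_rowStochastic (pow_mem hP m))
        ((hE.pow m).sum_apply_eq_one (pow_mem hP m) hk) hδ.le (hδm k hk)
        (fun k _ => hπ_nonneg k) hπE (sum_mul_pow_apply_sub_eq_zero hπE hπ_supp hπ _ j) (ih ℓ)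
  have hgeom : Tendsto (fun ℓ => (1 - δ) ^ (ℓ / m)) atTop (𝓝 0) :=
    (tendsto_pow_atTop_nhds_zero_of_lt_one (by linarith) (by linarith)).comp
      (Nat.tendsto_div_const_atTop hm)
  rw [tendsto_iff_norm_sub_tendsto_zero]
  refine squeeze_zero (fun _ => norm_nonneg _) (fun ℓ => ?_) hgeom
  simpa only [Real.norm_eq_abs, Nat.div_add_mod] using hdecay (ℓ / m) (ℓ % m) k hk

theorem tendsto_pow_apply_of_tendsto (hP : P ∈ rowStochastic ℝ ι) (hE : IsAbsorbing P E)
    {i j : ι} (hj : j ∈ E) {h c : ℝ}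
    (hS : Tendsto (fun ℓ => ∑ j' ∈ E, (P ^ ℓ) i j') atTop (𝓝 h))
    (hcol : ∀ k ∈ E, Tendsto (fun ℓ => (P ^ ℓ) k j) atTop (𝓝 c)) :
    Tendsto (fun ℓ => (P ^ ℓ) i j) atTop (𝓝 (h * c)) := by
  refine tendsto_of_forall_abs_add_sub_le (b := fun ℓ s => ∑ k ∈ E, (P ^ ℓ) i k * (P ^ s) k j)
    (c := fun ℓ => (∑ j' ∈ E, (P ^ ℓ) i j') * c) (e := fun ℓ => h - ∑ j' ∈ E, (P ^ ℓ) i j')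
    (fun ℓ => ?_) (hS.mul_const c) (by simpa using (tendsto_const_nhds (x := h)).sub hS)
    (fun ℓ s => ?_)
  · rw [sum_mul]
    exact tendsto_finsetSum E fun k hk => (hcol k hk).const_mul _
  · rw [pow_add]
    refine (abs_mul_apply_sub_sum_le (pow_mem hP ℓ) (pow_mem hP s) (hE.pow s) i hj).trans ?_
    rw [← pow_add]
    exact sub_le_sub_right ((hE.monotone_sum_pow_apply hP i).ge_of_tendsto hS (ℓ + s)) _

end IsAbsorbing

end Matrix

def IsErgodicClass {n : ℕ} (A : Matrix (Fin n) (Fin n) ℝ) (E : Finset (Fin n)) : Prop :=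
  ∃ i, Recurrent A i ∧ ∀ j, j ∈ E ↔ (Consequent A i j ∧ Consequent A j i)

section Consequent

variable {n : ℕ} {A : Matrix (Fin n) (Fin n) ℝ}

lemma pow_apply_mul_pow_apply_le (hA : A ∈ rowStochastic ℝ (Fin n)) (a b : ℕ) (x y z : Fin n) :
    (A ^ a) x y * (A ^ b) y z ≤ (A ^ (a + b)) x z :=
  pow_add A a b ▸ apply_mul_apply_le_mul_apply (pow_mem hA a) (pow_mem hA b) x y z

lemma consequent_of_pos {j k : Fin n} (h : 0 < A j k) : Consequent A j k :=
  ⟨1, le_rfl, by rwa [pow_one]⟩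

lemma Consequent.trans (hA : A ∈ rowStochastic ℝ (Fin n)) {x y z : Fin n}
    (hxy : Consequent A x y) (hyz : Consequent A y z) : Consequent A x z := by
  obtain ⟨a, ha1, ha⟩ := hxy
  obtain ⟨b, -, hb⟩ := hyz
  exact ⟨a + b, by omega, (mul_pos ha hb).trans_le (pow_apply_mul_pow_apply_le hA a b x y z)⟩

/-- A path may wait at `j`. -/
lemma pow_apply_pos_of_le (hA : A ∈ rowStochastic ℝ (Fin n)) (hself : ∀ i, 0 < A i i)
    {k j : Fin n} {a b : ℕ} (h : 0 < (A ^ a) k j) (hab : a ≤ b) : 0 < (A ^ b) k j := by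
  induction b, hab using Nat.le_induction with
  | base => exact h
  | succ b _ ih =>
    have hstep := pow_apply_mul_pow_apply_le hA b 1 k j j
    rw [pow_one] at hstep
    exact (mul_pos ih (hself j)).trans_le hstep

lemma exists_pow_apply_pos (hA : A ∈ rowStochastic ℝ (Fin n)) (hself : ∀ i, 0 < A i i)
    {E : Finset (Fin n)} (hE : ∀ k ∈ E, ∀ j ∈ E, Consequent A k j) :
    ∃ m ≠ 0, ∀ k ∈ E, ∀ j ∈ E, 0 < (A ^ m) k j := by
  unfold Consequent at hE
  choose! t _ ht using hE
  refine ⟨(E ×ˢ E).sup (fun p => t p.1 p.2) + 1, by omega, fun k hk j hj => ?_⟩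
  refine pow_apply_pos_of_le hA hself (ht k hk j hj) (Nat.le_succ_of_le ?_)
  exact le_sup (f := fun p : Fin n × Fin n => t p.1 p.2) (mk_mem_product hk hj)

namespace IsErgodicClass

variable {E : Finset (Fin n)}

lemma isAbsorbing (hA : A ∈ rowStochastic ℝ (Fin n)) (hE : IsErgodicClass A E) :
    IsAbsorbing A E := by
  obtain ⟨i, hrec, hmem⟩ := hE
  intro j hj k hk
  by_contra hjk
  have hik : Consequent A i k := ((hmem j).1 hj).1.trans hA
    (consequent_of_pos ((nonneg_of_mem_rowStochastic hA).lt_of_ne' hjk))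
  exact hk ((hmem k).2 ⟨hik, hrec k hik⟩)

lemma exists_pos_le_pow_apply (hA : A ∈ rowStochastic ℝ (Fin n)) (hself : ∀ i, 0 < A i i)
    (hE : IsErgodicClass A E) :
    ∃ m ≠ 0, ∃ δ > 0, ∀ k ∈ E, ∀ k' ∈ E, δ ≤ (A ^ m) k k' := by
  obtain ⟨i, -, hmem⟩ := hE
  obtain ⟨m, hm, hpos⟩ := exists_pow_apply_pos hA hself fun k hk j hj =>
    ((hmem k).1 hk).2.trans hA ((hmem j).1 hj).1
  obtain ⟨δ, hδ, hδm⟩ := (E ×ˢ E).exists_pos_forall_le fun p hp =>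
    hpos p.1 (mem_product.1 hp).1 p.2 (mem_product.1 hp).2
  exact ⟨m, hm, δ, hδ, fun k hk k' hk' => hδm (k, k') (mk_mem_product hk hk')⟩

end IsErgodicClass

end Consequent

theorem matrix_power_limit_ergodic_class_general
    (n : ℕ)
    (A : Matrix (Fin n) (Fin n) ℝ)
    (hA_nonneg : ∀ i j, 0 ≤ A i j)
    (hA_rows : ∀ i, ∑ j, A i j = 1)
    (hself : ∀ i, 0 < A i i)
    (E : Finset (Fin n))
    (hE_class : ∃ i, Recurrent A i ∧
      ∀ j, j ∈ E ↔ (Consequent A i j ∧ Consequent A j i))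
    (π : Fin n → ℝ)
    (hπ_nonneg : ∀ j, 0 ≤ π j)
    (hπ_sum : ∑ j, π j = 1)
    (hπ_supp : ∀ j ∉ E, π j = 0)
    (hπ_stat : ∀ j, ∑ i, π i * A i j = π j) :
    ∀ i : Fin n, ∃ hE : ℝ,
      Tendsto (fun ℓ : ℕ => ∑ j' ∈ E, (A ^ ℓ) i j') atTop (𝓝 hE) ∧
      ∀ j ∈ E, Tendsto (fun ℓ : ℕ => (A ^ ℓ) i j) atTop (𝓝 (hE * π j)) := by
  have hA : A ∈ rowStochastic ℝ (Fin n) := mem_rowStochastic_iff_sum.2 ⟨hA_nonneg, hA_rows⟩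
  have hAE : IsAbsorbing A E := IsErgodicClass.isAbsorbing hA hE_class
  obtain ⟨m, hm, δ, hδ, hδm⟩ := IsErgodicClass.exists_pos_le_pow_apply hA hself hE_class
  have hcol : ∀ k ∈ E, ∀ j, Tendsto (fun ℓ => (A ^ ℓ) k j) atTop (𝓝 (π j)) :=
    fun k hk => hAE.tendsto_pow_apply hA hm hδ hδm hπ_nonneg hπ_sum hπ_supp (funext hπ_stat) hk
  intro i
  have hS := hAE.tendsto_sum_pow_apply hA i
  exact ⟨_, hS, fun j hj => hAE.tendsto_pow_apply_of_tendsto hA hj hS fun k hk => hcol k hk j⟩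

/-- for a row-stochastic matrix `A` with self-confidence, an
ergodic class `E` and a stationary distribution `π` supported on `E`, for
every state `i` the limit `hE = lim_ℓ ∑_{j' ∈ E} (A^ℓ) i j'` exists and
`lim_ℓ (A^ℓ) i j = hE * π j` for every `j ∈ E`. -/
theorem matrix_power_limit_ergodic_class
    (n : ℕ) (hn : 1 ≤ n)
    (A : Matrix (Fin n) (Fin n) ℝ)
    (hA_nonneg : ∀ i j, 0 ≤ A i j)
    (hA_rows : ∀ i, ∑ j, A i j = 1)
    (hself : ∀ i, 0 < A i i)
    (E : Finset (Fin n))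
    (hE_class : ∃ i, Recurrent A i ∧
      ∀ j, j ∈ E ↔ (Consequent A i j ∧ Consequent A j i))
    (π : Fin n → ℝ)
    (hπ_nonneg : ∀ j, 0 ≤ π j)
    (hπ_sum : ∑ j, π j = 1)
    (hπ_supp : ∀ j ∉ E, π j = 0)
    (hπ_stat : ∀ j, ∑ i, π i * A i j = π j) :
    ∀ i : Fin n, ∃ hE : ℝ,
      Tendsto (fun ℓ : ℕ => ∑ j' ∈ E, (A ^ ℓ) i j') atTop (𝓝 hE) ∧
      ∀ j ∈ E, Tendsto (fun ℓ : ℕ => (A ^ ℓ) i j) atTop (𝓝 (hE * π j)) :=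
  matrix_power_limit_ergodic_class_general n A hA_nonneg hA_rows hself E hE_class π hπ_nonneg hπ_sum
    hπ_supp hπ_stat
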